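/- Assume V is finite-dimensional. Let G₂ = {x ∈ G | π^x is isomorphic to π}; this set is a subgroup of G containing N. Let (ρ, W) be an irreducible representation of G₂ that is isomorphic to a subrepresentation of the induced representation Ind_N^{G₂} π. Then the induced representation Ind_{G₂}^G ρ is irreducible. -/

import Mathlib

/-!
Take a nonzero invariant subspace `U` of `Ind_{G₂}^G ρ` and `f ∈ U`, `f ≠ 0`, whose support meets
the fewest cosets of `G₂`. Suppose `f a ≠ 0 ≠ f b`. On the `N`-stable subspace `Y` of those
elements of `U` vanishing wherever `f` does, evaluation at `a` is injective (by minimality), and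
evaluation at `g` intertwines `Y|_N` with the conjugate `ρ^g|_N`. As `ρ ⊆ Ind_N^{G₂} π`, `ρ^a|_N`
and `ρ^b|_N` embed into sums of the irreducibles `π^{ay}`, `π^{by'}` (`y, y' ∈ G₂`), and by
Schur's lemma no `π^{ay}` is isomorphic to a `π^{by'}` unless `b⁻¹ a ∈ G₂`; an induction over
these constituents then kills evaluation at `b` on `Y`, contradicting `f b ≠ 0`. Hence `f` lives
on one coset; translated to `G₂`, it is determined by its value at `1`, and irreducibility of `ρ`
plus the decomposition of `Ind_{G₂}^G ρ` into translates of such functions gives `U = ⊤`.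
-/

/-- The induced representation `Ind_H^G ρ` realized concretely: for a subgroup `H ≤ G`
of finite index, the space of formal sums `Σ_{x ∈ G/H} x·w_x` with `w_x ∈ W` is
identified with the space of functions `f : G → W` satisfying `f(gh) = ρ(h⁻¹) f(g)`
(the value `f(x)` being the coefficient `w_x`). -/
def IndSubmodule {G : Type*} [Group G] (H : Subgroup G) {W : Type*}
    [AddCommGroup W] [Module ℂ W] (ρ : Representation ℂ ↥H W) :
    Submodule ℂ (G → W) where
  carrier := {f | ∀ (g : G) (h : ↥H), f (g * ↑h) = ρ h⁻¹ (f g)}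
  add_mem' := by
    intro a b ha hb g h
    simp only [Pi.add_apply, ha g h, hb g h, map_add]
  zero_mem' := by
    intro g h
    simp
  smul_mem' := by
    intro c f hf g h
    simp only [Pi.smul_apply, hf g h, map_smul]

/-- The action of `G` on `Ind_H^G ρ` by left translation. -/
def IndRep {G : Type*} [Group G] (H : Subgroup G) {W : Type*}
    [AddCommGroup W] [Module ℂ W] (ρ : Representation ℂ ↥H W) :
    Representation ℂ G ↥(IndSubmodule H ρ) where
  toFun x :=
    { toFun := fun f => ⟨fun g => (f : G → W) (x⁻¹ * g), by
        intro g h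
        show (f : G → W) (x⁻¹ * (g * ↑h)) = ρ h⁻¹ ((f : G → W) (x⁻¹ * g))
        rw [← mul_assoc]
        exact f.2 (x⁻¹ * g) h⟩
      map_add' := by intro a b; ext g; rfl
      map_smul' := by intro c a; ext g; rfl }
  map_one' := by
    ext f g
    simp
  map_mul' := by
    intro a b
    ext f g
    simp [mul_assoc]

open Function Representation

namespace Representation

section

variable {k G H V W : Type*} [Semiring k] [Monoid G] [Monoid H]
  [AddCommMonoid V] [Module k V] [AddCommMonoid W] [Module k W]
  {ρ : Representation k G V} {σ : Representation k G W}

def IntertwiningMap.pullback (e : H →* G) (f : IntertwiningMap ρ σ) :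
    IntertwiningMap (ρ.comp e) (σ.comp e) :=
  ⟨f.toLinearMap, fun h => f.isIntertwining' (e h)⟩

def Equiv.pullback (e : H →* G) (f : ρ.Equiv σ) :
    Representation.Equiv (ρ.comp e) (σ.comp e) :=
  .mk f.toLinearEquiv fun h => f.isIntertwining' (e h)

def _root_.Subrepresentation.subtype (ρ' : Subrepresentation ρ) :
    IntertwiningMap ρ'.toRepresentation ρ :=
  ⟨ρ'.toSubmodule.subtype, fun _ => rfl⟩

end

section

variable {k G H V : Type*} [Field k] [Monoid G] [Monoid H] [AddCommGroup V] [Module k V]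

theorem isIrreducible_iff (ρ : Representation k G V) :
    IsIrreducible ρ ↔ Nontrivial V ∧
      ∀ U : Submodule k V, (∀ (g : G) (v : V), v ∈ U → ρ g v ∈ U) → U = ⊥ ∨ U = ⊤ := by
  constructor
  · intro h
    refine ⟨?_, fun U hU => ?_⟩
    · by_contra hV
      rw [not_nontrivial_iff_subsingleton] at hV
      exact bot_ne_top (α := Subrepresentation ρ) (Subrepresentation.ext (Subsingleton.elim _ _))
    · rcases eq_bot_or_eq_top (⟨U, hU⟩ : Subrepresentation ρ) with h | h
      · exact .inl (congrArg Subrepresentation.toSubmodule h)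
      · exact .inr (congrArg Subrepresentation.toSubmodule h)
  · rintro ⟨hV, h⟩
    have : Nontrivial (Subrepresentation ρ) :=
      ⟨⊥, ⊤, fun h' => bot_ne_top (congrArg Subrepresentation.toSubmodule h')⟩
    refine ⟨fun U => ?_⟩
    rcases h U.toSubmodule U.apply_mem_toSubmodule with h | h
    · exact .inl (Subrepresentation.ext h)
    · exact .inr (Subrepresentation.ext h)

theorem IsIrreducible.comp_of_surjective {ρ : Representation k G V} [IsIrreducible ρ]
    {e : H →* G} (he : Surjective e) : IsIrreducible (ρ.comp e) := by
  obtain ⟨hV, h⟩ := (isIrreducible_iff ρ).mp ‹_›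
  refine (isIrreducible_iff _).mpr ⟨hV, fun U hU => h U fun g v hv => ?_⟩
  obtain ⟨g, rfl⟩ := he g
  exact hU g v hv

end

section

variable {k G V : Type*} [Semiring k] [Group G] [AddCommMonoid V] [Module k V]
  {N : Subgroup G} [N.Normal]

/-- The conjugate `π^c : n ↦ π (c⁻¹ * n * c)`. -/
def conj (π : Representation k N V) (c : G) : Representation k N V :=
  π.comp (MulAut.conjNormal c).symm.toMonoidHom

theorem conj_apply_of_coe_eq (π : Representation k N V) {c : G} {n m : N}
    (h : (m : G) = c⁻¹ * n * c) : π.conj c n = π m :=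
  congrArg π (Subtype.ext (by simp [h]))

theorem conj_one (π : Representation k N V) : π.conj 1 = π := by
  ext1 n
  exact conj_apply_of_coe_eq π (by simp)

theorem conj_conj (π : Representation k N V) (c d : G) : (π.conj d).conj c = π.conj (c * d) := by
  ext1 n
  refine congrArg π (Subtype.ext ?_)
  simp only [MulEquiv.coe_toMonoidHom, MulAut.conjNormal_symm_apply, mul_inv_rev]
  group

end

section

variable {k G V : Type*} [Field k] [Group G] [AddCommGroup V] [Module k V]
  {N : Subgroup G} [N.Normal]

instance (π : Representation k N V) [IsIrreducible π] (c : G) : IsIrreducible (π.conj c) :=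
  IsIrreducible.comp_of_surjective (MulEquiv.surjective _)

theorem IsIrreducible.intertwiningMap_conj_eq_zero {π : Representation k N V} [IsIrreducible π]
    {G₂ : Subgroup G} (hG₂ : ∀ x, Nonempty ((π.conj x).Equiv π) → x ∈ G₂) {c d : G}
    (hcd : d⁻¹ * c ∉ G₂) (ψ : IntertwiningMap (π.conj c) (π.conj d)) : ψ = 0 := by
  refine (IsIrreducible.bijective_or_eq_zero ψ).resolve_left fun hψ => hcd (hG₂ _ ⟨?_⟩)
  have e : ((π.conj c).conj d⁻¹).Equiv ((π.conj d).conj d⁻¹) :=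
    (ψ.ofBijective hψ).pullback _
  rwa [conj_conj, conj_conj, inv_mul_cancel, conj_one] at e

end

section

variable {k G W W' ι : Type*} [Field k] [Monoid G] [AddCommGroup W] [Module k W]
  [AddCommGroup W'] [Module k W'] {V : ι → Type*} [∀ i, AddCommGroup (V i)]
  [∀ i, Module k (V i)]

theorem IntertwiningMap.exists_comp_eq_of_surjective {V' : Type*} [AddCommGroup V']
    [Module k V'] {σ : Representation k G W} {τ : Representation k G V'}
    {τ' : Representation k G W'} (p : IntertwiningMap σ τ) (hp : Surjective p)
    (φ : IntertwiningMap σ τ') (h : ∀ w, p w = 0 → φ w = 0) :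
    ∃ ψ : IntertwiningMap τ τ', ψ.comp p = φ := by
  obtain ⟨s, hs⟩ :=
    p.toLinearMap.exists_rightInverse_of_surjective (LinearMap.range_eq_top.mpr hp)
  have hsp : ∀ v, p (s v) = v := fun v => LinearMap.congr_fun hs v
  have hfac : ∀ w, φ (s (p w)) = φ w := fun w => by
    rw [← sub_eq_zero, ← map_sub]
    exact h _ (by rw [map_sub, hsp, sub_self])
  refine ⟨⟨φ.toLinearMap ∘ₗ s, fun g => LinearMap.ext fun v => ?_⟩,
    ext (LinearMap.ext hfac)⟩
  obtain ⟨w, rfl⟩ := hp v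
  simp [hfac, ← p.isIntertwining, φ.isIntertwining]

theorem IntertwiningMap.eq_zero_of_jointly_injective {σ : Representation k G W}
    {τ : ∀ i, Representation k G (V i)} [∀ i, IsIrreducible (τ i)]
    {τ' : Representation k G W'} (hτ : ∀ i (ψ : IntertwiningMap (τ i) τ'), ψ = 0)
    (s : Finset ι) (p : ∀ i, IntertwiningMap σ (τ i)) (hp : ∀ w, (∀ i ∈ s, p i w = 0) → w = 0)
    (φ : IntertwiningMap σ τ') : φ = 0 := by
  classical
  induction s using Finset.induction_on generalizing W with
  | empty =>
    ext w
    simp [hp w (by simp)]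
  | insert j s hj ih =>
    -- Either `p j` vanishes and can be dropped, or it is onto and `φ` factors through it.
    rcases eq_bot_or_eq_top (p j).range with hbot | htop
    · refine ih p (fun w hw => hp w ?_) φ
      rintro i hi
      rcases Finset.mem_insert.mp hi with rfl | hi
      · have hmem : p i w ∈ (p i).range := ⟨w, rfl⟩
        rwa [hbot] at hmem
      · exact hw i hi
    · have hsurj : Surjective (p j) := fun v => show v ∈ (p j).range by rw [htop]; trivial
      have hK : φ.comp (p j).ker.subtype = 0 :=
        ih (fun i => (p i).comp (p j).ker.subtype)
          (fun w hw => Subtype.ext (hp w (Finset.forall_mem_insert _ _ _ |>.mpr ⟨w.2, hw⟩)))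
          (φ.comp (p j).ker.subtype)
      obtain ⟨ψ, rfl⟩ := (p j).exists_comp_eq_of_surjective hsurj φ
        fun w hw => congrArg (· ⟨w, hw⟩) hK
      rw [hτ j ψ]
      ext
      simp

end

theorem IntertwiningMap.apply_eq_zero_of_conj_inv_mul_notMem {k G V W Y ι : Type*} [Field k]
    [Group G] [AddCommGroup V] [Module k V] [AddCommGroup W] [Module k W] [AddCommGroup Y]
    [Module k Y]
    {N : Subgroup G} [N.Normal] {π : Representation k N V} [IsIrreducible π] {G₂ : Subgroup G}
    (hG₂ : ∀ x, Nonempty ((π.conj x).Equiv π) → x ∈ G₂) {τ : Representation k N W}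
    (s : Finset ι) (y : ι → G) (hy : ∀ i, y i ∈ G₂) (p : ∀ i, IntertwiningMap τ (π.conj (y i)))
    (hp : ∀ w, (∀ i ∈ s, p i w = 0) → w = 0) {σ : Representation k N Y} {a b : G}
    (hab : b⁻¹ * a ∉ G₂) (X : Subrepresentation σ) (α : IntertwiningMap σ (τ.conj a))
    (hα : ∀ x ∈ X, α x = 0 → x = 0) (β : IntertwiningMap σ (τ.conj b)) :
    ∀ x ∈ X, β x = 0 := by
  have hschur : ∀ i j (ψ : IntertwiningMap ((π.conj (y i)).conj a) ((π.conj (y j)).conj b)),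
      ψ = 0 := by
    intro i j
    rw [conj_conj, conj_conj]
    refine IsIrreducible.intertwiningMap_conj_eq_zero hG₂ fun h => hab ?_
    convert G₂.mul_mem (G₂.mul_mem (hy j) h) (G₂.inv_mem (hy i)) using 1
    group
  have hβ : ∀ j, (((p j).pullback _ : IntertwiningMap (τ.conj b) ((π.conj (y j)).conj b))).comp
      (β.comp X.subtype) = 0 := fun j =>
    eq_zero_of_jointly_injective (hschur · j) s
      (fun i => ((p i).pullback _ : IntertwiningMap (τ.conj a) ((π.conj (y i)).conj a)).comp
        (α.comp X.subtype))
      (fun x hx => Subtype.ext (hα x x.2 (hp _ hx))) _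
  intro x hx
  exact hp _ fun j _ => congrArg (· ⟨x, hx⟩) (hβ j)

end Representation

namespace IndSubmodule

variable {G W : Type*} [Group G] [AddCommGroup W] [Module ℂ W] {H : Subgroup G}
  {ρ : Representation ℂ H W}

theorem apply_of_eq_mul (f : IndSubmodule H ρ) {g g' : G} (h : H) (hg : g' = g * h) :
    (f : G → W) g' = ρ h⁻¹ ((f : G → W) g) :=
  hg ▸ f.2 g h

theorem _root_.IndRep_apply (x : G) (f : IndSubmodule H ρ) (g : G) :
    (IndRep H ρ x f : G → W) g = (f : G → W) (x⁻¹ * g) :=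
  rfl

theorem apply_eq_zero_iff_of_mk_eq (f : IndSubmodule H ρ) {g g' : G}
    (hg : (g : G ⧸ H) = g') : (f : G → W) g = 0 ↔ (f : G → W) g' = 0 := by
  rw [apply_of_eq_mul f (g := g) (g' := g') ⟨g⁻¹ * g', QuotientGroup.eq.mp hg⟩ (by simp),
    inv_apply_eq_iff, map_zero]

theorem apply_mul_eq_zero_iff {N : Subgroup G} [N.Normal] (hNle : N ≤ H)
    (f : IndSubmodule H ρ) {n : G} (hn : n ∈ N) (g : G) :
    (f : G → W) (n * g) = 0 ↔ (f : G → W) g = 0 :=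
  (apply_eq_zero_iff_of_mk_eq f) <| QuotientGroup.eq.mpr <|
    hNle (by simpa [mul_assoc] using Subgroup.Normal.conj_mem' ‹_› _ (N.inv_mem hn) g)

theorem eq_zero_of_forall_out_eq_zero (f : IndSubmodule H ρ)
    (hf : ∀ q : G ⧸ H, (f : G → W) q.out = 0) : f = 0 :=
  Subtype.ext <| funext fun g => (apply_eq_zero_iff_of_mk_eq f (QuotientGroup.out_eq' _)).mp (hf g)

variable (H ρ) in
def eval (g : G) : IndSubmodule H ρ →ₗ[ℂ] W :=
  (LinearMap.proj g).comp (IndSubmodule H ρ).subtype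

theorem eval_apply (g : G) (f : IndSubmodule H ρ) : eval H ρ g f = (f : G → W) g :=
  rfl

theorem eval_IndRep_coe {N : Subgroup G} [N.Normal] (hNle : N ≤ H) (g : G) (n : N)
    (f : IndSubmodule H ρ) :
    eval H ρ g (IndRep H ρ n f) = conj (ρ.comp (Subgroup.inclusion hNle)) g n (eval H ρ g f) := by
  let m : N := ⟨g⁻¹ * n * g, Subgroup.Normal.conj_mem' ‹_› _ n.2 g⟩
  rw [conj_apply_of_coe_eq _ (m := m) rfl]
  have := apply_of_eq_mul f (g := g) (g' := (n : G)⁻¹ * g) (Subgroup.inclusion hNle m)⁻¹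
    (by simp [m, mul_assoc])
  rwa [inv_inv] at this

def evalIntertwiningMap {N : Subgroup G} [N.Normal] (hNle : N ≤ H) (g : G) :
    IntertwiningMap ((IndRep H ρ).comp N.subtype) (conj (ρ.comp (Subgroup.inclusion hNle)) g) :=
  (eval H ρ g).intertwiningMap_of_isIntertwiningMap _ _ (eval_IndRep_coe hNle g)

theorem eval_IndRep_inclusion {N G₂ : Subgroup G} [N.Normal] (hNle : N ≤ G₂) {V : Type*}
    [AddCommGroup V] [Module ℂ V] (π : Representation ℂ N V) (y : G₂) (n : N)
    (F : IndSubmodule (N.subgroupOf G₂) (π.comp (Subgroup.subgroupOfEquivOfLe hNle).toMonoidHom)) :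
    eval _ _ y (IndRep _ _ (Subgroup.inclusion hNle n) F) = π.conj y n (eval _ _ y F) := by
  let m : N := ⟨(y : G)⁻¹ * n * y, Subgroup.Normal.conj_mem' ‹_› _ n.2 y⟩
  rw [conj_apply_of_coe_eq _ (m := m) rfl]
  have := apply_of_eq_mul F (g := y) (g' := (Subgroup.inclusion hNle n)⁻¹ * y)
    ((Subgroup.subgroupOfEquivOfLe hNle).symm m)⁻¹ (by ext; simp [m, mul_assoc])
  rwa [inv_inv] at this

def cosetSupport (f : IndSubmodule H ρ) : Set (G ⧸ H) :=
  QuotientGroup.mk '' Function.support (f : G → W)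

theorem mk_mem_cosetSupport (f : IndSubmodule H ρ) (g : G) :
    (g : G ⧸ H) ∈ cosetSupport f ↔ (f : G → W) g ≠ 0 :=
  ⟨fun ⟨_, hg', hmk⟩ h => hg' ((apply_eq_zero_iff_of_mk_eq f hmk).mpr h), fun h => ⟨g, h, rfl⟩⟩

theorem exists_subrepresentation_evalIntertwiningMap_injective [Finite (G ⧸ H)]
    {N : Subgroup G} [N.Normal] (hNle : N ≤ H) {U : Submodule ℂ (IndSubmodule H ρ)}
    (hU : ∀ (x : G) (w : IndSubmodule H ρ), w ∈ U → IndRep H ρ x w ∈ U)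
    {f : IndSubmodule H ρ} (hfU : f ∈ U)
    (hmin : ∀ y ∈ U, y ≠ 0 → (cosetSupport f).ncard ≤ (cosetSupport y).ncard)
    {a : G} (ha : (f : G → W) a ≠ 0) :
    ∃ Y : Subrepresentation ((IndRep H ρ).comp N.subtype),
      f ∈ Y ∧ ∀ y ∈ Y, evalIntertwiningMap hNle a y = 0 → y = 0 := by
  let Y : Subrepresentation ((IndRep H ρ).comp N.subtype) :=
    { toSubmodule := U ⊓ ⨅ (g : G) (_ : (f : G → W) g = 0), LinearMap.ker (eval H ρ g)
      apply_mem_toSubmodule := fun n y hy => by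
        simp only [Submodule.mem_inf, Submodule.mem_iInf, LinearMap.mem_ker, eval_apply] at hy ⊢
        refine ⟨hU _ _ hy.1, fun g hg => hy.2 _ ?_⟩
        exact (apply_mul_eq_zero_iff hNle f (N.inv_mem n.2) g).mpr hg }
  refine ⟨Y, ⟨hfU, by simp [eval_apply]⟩, ?_⟩
  rintro y ⟨hyU, hyf⟩ hya
  by_contra hy0
  replace hyf : ∀ g, (f : G → W) g = 0 → (y : G → W) g = 0 := by
    simpa [Submodule.mem_iInf, eval_apply] using hyf
  have hlt : cosetSupport y ⊂ cosetSupport f := by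
    refine (Set.ssubset_iff_of_subset ?_).mpr ⟨a, (mk_mem_cosetSupport f a).mpr ha,
      fun h => (mk_mem_cosetSupport y a).mp h hya⟩
    rintro _ ⟨g, hg, rfl⟩
    exact (mk_mem_cosetSupport f g).mpr fun h => hg (hyf g h)
  exact (hmin y hyU hy0).not_gt (Set.ncard_lt_ncard hlt (Set.toFinite _))

open scoped Classical in
variable (H ρ) in
noncomputable def single : W →ₗ[ℂ] IndSubmodule H ρ where
  toFun w := ⟨fun g => if hg : g ∈ H then ρ ⟨g, hg⟩⁻¹ w else 0, fun g h => by
    beta_reduce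
    by_cases hg : g ∈ H
    · rw [dif_pos (H.mul_mem hg h.2), dif_pos hg, ← Module.End.mul_apply, ← map_mul]
      congr
      ext
      simp
    · rw [dif_neg (fun h' => hg (by simpa using H.mul_mem h' (H.inv_mem h.2))), dif_neg hg,
        map_zero]⟩
  map_add' v w := by
    ext g
    by_cases hg : g ∈ H <;> simp [hg]
  map_smul' c w := by
    ext g
    by_cases hg : g ∈ H <;> simp [hg]

theorem single_apply_of_mem (w : W) (h : H) : (single H ρ w : G → W) h = ρ h⁻¹ w :=
  dif_pos h.2

theorem single_apply_of_notMem (w : W) {g : G} (hg : g ∉ H) : (single H ρ w : G → W) g = 0 :=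
  dif_neg hg

theorem IndRep_single (t : H) (w : W) :
    IndRep H ρ t (single H ρ w) = single H ρ (ρ t w) := by
  ext g
  rw [IndRep_apply]
  by_cases hg : g ∈ H
  · rw [single_apply_of_mem w ⟨(t : G)⁻¹ * g, H.mul_mem (H.inv_mem t.2) hg⟩,
      single_apply_of_mem (ρ t w) ⟨g, hg⟩, ← Module.End.mul_apply, ← map_mul]
    congr
    ext
    simp
  · rw [single_apply_of_notMem w fun h => hg (by simpa using H.mul_mem t.2 h),
      single_apply_of_notMem _ hg]

theorem eq_single_of_forall_notMem (f : IndSubmodule H ρ) (hf : ∀ g ∉ H, (f : G → W) g = 0) :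
    f = single H ρ ((f : G → W) 1) := by
  ext g
  by_cases hg : g ∈ H
  · rw [single_apply_of_mem _ ⟨g, hg⟩]
    exact apply_of_eq_mul f ⟨g, hg⟩ (one_mul g).symm
  · rw [single_apply_of_notMem _ hg, hf g hg]

theorem sum_IndRep_single [Fintype (G ⧸ H)] (f : IndSubmodule H ρ) :
    ∑ q : G ⧸ H, IndRep H ρ q.out (single H ρ ((f : G → W) q.out)) = f := by
  ext g
  rw [Submodule.coe_sum, Finset.sum_apply,
    Finset.sum_eq_single_of_mem (g : G ⧸ H) (Finset.mem_univ _)]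
  · have hk : (Quotient.out (g : G ⧸ H))⁻¹ * g ∈ H := QuotientGroup.eq.mp (by simp)
    rw [IndRep_apply, single_apply_of_mem _ ⟨_, hk⟩]
    exact (apply_of_eq_mul f ⟨_, hk⟩ (by simp)).symm
  · intro q _ hq
    rw [IndRep_apply, single_apply_of_notMem]
    exact fun h => hq (by rw [← QuotientGroup.out_eq' q]; exact QuotientGroup.eq.mpr h)

theorem eq_top_of_single_mem [Finite (G ⧸ H)] [IsIrreducible ρ]
    {U : Submodule ℂ (IndSubmodule H ρ)}
    (hU : ∀ (x : G) (w : IndSubmodule H ρ), w ∈ U → IndRep H ρ x w ∈ U) {w : W} (hw : w ≠ 0)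
    (hwU : single H ρ w ∈ U) : U = ⊤ := by
  let U₀ : Subrepresentation ρ := ⟨U.comap (single H ρ), fun t v hv => by
    rw [Submodule.mem_comap, ← IndRep_single]
    exact hU _ _ hv⟩
  have hU₀ : U₀ = ⊤ := (eq_bot_or_eq_top U₀).resolve_left fun h => hw <| by
    have hwU₀ : w ∈ U₀ := hwU
    rwa [h] at hwU₀
  cases nonempty_fintype (G ⧸ H)
  refine Submodule.eq_top_iff'.mpr fun f => ?_
  rw [← sum_IndRep_single f]
  refine U.sum_mem fun q _ => hU _ _ ?_
  show (f : G → W) q.out ∈ U₀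
  rw [hU₀]
  trivial

end IndSubmodule

theorem IndSubmodule.apply_eq_zero_of_conj_inv_mul_notMem {G : Type*} [Group G]
    {N G₂ : Subgroup G} [N.Normal] [Finite (G₂ ⧸ N.subgroupOf G₂)] (hNle : N ≤ G₂) {V W Y : Type*}
    [AddCommGroup V] [Module ℂ V] [AddCommGroup W] [Module ℂ W] [AddCommGroup Y] [Module ℂ Y]
    (π : Representation ℂ N V) [IsIrreducible π]
    (hG₂ : ∀ x, Nonempty ((π.conj x).Equiv π) → x ∈ G₂) (ρ : Representation ℂ G₂ W)
    (Φ : W →ₗ[ℂ] IndSubmodule (N.subgroupOf G₂)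
      (π.comp (Subgroup.subgroupOfEquivOfLe hNle).toMonoidHom))
    (hΦinj : Injective Φ) (hΦ : ∀ (g : G₂) (w : W), Φ (ρ g w) = IndRep _ _ g (Φ w))
    {σ : Representation ℂ N Y} {a b : G} (hab : b⁻¹ * a ∉ G₂) (X : Subrepresentation σ)
    (α : IntertwiningMap σ (conj (ρ.comp (Subgroup.inclusion hNle)) a))
    (hα : ∀ x ∈ X, α x = 0 → x = 0)
    (β : IntertwiningMap σ (conj (ρ.comp (Subgroup.inclusion hNle)) b)) : ∀ x ∈ X, β x = 0 := by
  have := Fintype.ofFinite (G₂ ⧸ N.subgroupOf G₂)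
  refine IntertwiningMap.apply_eq_zero_of_conj_inv_mul_notMem hG₂ Finset.univ
    (fun q : G₂ ⧸ N.subgroupOf G₂ => (q.out : G)) (fun q => q.out.2)
    (fun q => (eval _ _ q.out ∘ₗ Φ).intertwiningMap_of_isIntertwiningMap _ _
      fun n w => ?_)
    (fun w hw => hΦinj ?_) hab X α hα β
  · rw [LinearMap.comp_apply, MonoidHom.comp_apply, hΦ]
    exact eval_IndRep_inclusion hNle π q.out n (Φ w)
  · rw [map_zero]
    exact eq_zero_of_forall_out_eq_zero _ fun q => hw q (Finset.mem_univ q)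

theorem induced_from_G2_irreducible_general {G : Type*} [Group G] (N : Subgroup G)
    (hN : N.Normal) [N.FiniteIndex]
    {V : Type*} [AddCommGroup V] [Module ℂ V] [Nontrivial V]
    (π : Representation ℂ ↥N V)
    (hπirr : ∀ U : Submodule ℂ V, (∀ (g : ↥N) (v : V), v ∈ U → π g v ∈ U) →
      U = ⊥ ∨ U = ⊤)
    (G₂ : Subgroup G)
    (hG₂ : ∀ x : G, x ∈ G₂ ↔
      ∃ T : V ≃ₗ[ℂ] V, ∀ g g' : ↥N, (↑g' : G) = x⁻¹ * ↑g * x →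
        (T : V →ₗ[ℂ] V) ∘ₗ (π g' : V →ₗ[ℂ] V) =
          (π g : V →ₗ[ℂ] V) ∘ₗ (T : V →ₗ[ℂ] V))
    (hNle : N ≤ G₂)
    {W : Type*} [AddCommGroup W] [Module ℂ W] [Nontrivial W]
    (ρ : Representation ℂ ↥G₂ W)
    (hρirr : ∀ U : Submodule ℂ W, (∀ (g : ↥G₂) (w : W), w ∈ U → ρ g w ∈ U) →
      U = ⊥ ∨ U = ⊤)
    (hsub : ∃ Φ : W →ₗ[ℂ] ↥(IndSubmodule (N.subgroupOf G₂)
        (π.comp (Subgroup.subgroupOfEquivOfLe hNle).toMonoidHom)),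
      Function.Injective Φ ∧ ∀ (g : ↥G₂) (w : W),
        Φ (ρ g w) = IndRep (N.subgroupOf G₂)
          (π.comp (Subgroup.subgroupOfEquivOfLe hNle).toMonoidHom) g (Φ w)) :
    ∀ U : Submodule ℂ ↥(IndSubmodule G₂ ρ),
      (∀ (x : G) (w : ↥(IndSubmodule G₂ ρ)), w ∈ U → IndRep G₂ ρ x w ∈ U) →
      U = ⊥ ∨ U = ⊤ := by
  intro U hU
  have := hN
  have : IsIrreducible π := (isIrreducible_iff π).mpr ⟨inferInstance, hπirr⟩
  have : IsIrreducible ρ := (isIrreducible_iff ρ).mpr ⟨inferInstance, hρirr⟩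
  have := Subgroup.finiteIndex_of_le hNle
  have hG₂' : ∀ x, Nonempty ((π.conj x).Equiv π) → x ∈ G₂ := fun x ⟨e⟩ =>
    (hG₂ x).mpr ⟨e.toLinearEquiv, fun g g' hg => by
      rw [← conj_apply_of_coe_eq π hg]
      exact e.isIntertwining' g⟩
  obtain ⟨Φ, hΦinj, hΦ⟩ := hsub
  rcases eq_or_ne U ⊥ with hU0 | hU0
  · exact .inl hU0
  obtain ⟨f, ⟨hfU, hf0⟩, hmin⟩ :=
    (measure fun f => (IndSubmodule.cosetSupport f).ncard).wf.has_min {f | f ∈ U ∧ f ≠ 0}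
      ((Submodule.ne_bot_iff U).mp hU0)
  obtain ⟨a, ha⟩ : ∃ a, (f : G → W) a ≠ 0 := by
    by_contra! h
    exact hf0 (Subtype.ext (funext h))
  have hsupp : ∀ b, (f : G → W) b ≠ 0 → b⁻¹ * a ∈ G₂ := by
    intro b hb
    by_contra hab
    obtain ⟨Y, hfY, hY⟩ := IndSubmodule.exists_subrepresentation_evalIntertwiningMap_injective
      hNle hU hfU (fun y hy hy0 => not_lt.mp (hmin y ⟨hy, hy0⟩)) ha
    exact hb (IndSubmodule.apply_eq_zero_of_conj_inv_mul_notMem hNle π hG₂' ρ Φ hΦinj hΦ hab Y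
      _ hY (IndSubmodule.evalIntertwiningMap hNle b) f hfY)
  refine .inr (IndSubmodule.eq_top_of_single_mem hU ha ?_)
  have hf' := IndSubmodule.eq_single_of_forall_notMem (IndRep G₂ ρ a⁻¹ f) fun g hg => by
    by_contra h
    exact hg (by simpa using hsupp (a * g) (by simpa [IndRep_apply] using h))
  simp only [IndRep_apply, inv_inv, mul_one] at hf'
  exact hf' ▸ hU _ _ hfU

/-- Let `N` be a normal subgroup of finite index in `G` and `(π, V)`
an irreducible representation of `N` on a nonzero finite-dimensional complex vector
space. Let `G₂ = {x ∈ G | π^x ≅ π}`, a subgroup of `G` containing `N`. If `(ρ, W)` is an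
irreducible representation of `G₂` isomorphic to a subrepresentation of the induced
representation `Ind_N^{G₂} π`, then the induced representation `Ind_{G₂}^G ρ` is
irreducible. -/
theorem induced_from_G2_irreducible {G : Type*} [Group G] (N : Subgroup G)
    (hN : N.Normal) [N.FiniteIndex]
    {V : Type*} [AddCommGroup V] [Module ℂ V] [Nontrivial V] [FiniteDimensional ℂ V]
    (π : Representation ℂ ↥N V)
    (hπirr : ∀ U : Submodule ℂ V, (∀ (g : ↥N) (v : V), v ∈ U → π g v ∈ U) →
      U = ⊥ ∨ U = ⊤)
    (G₂ : Subgroup G)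
    (hG₂ : ∀ x : G, x ∈ G₂ ↔
      ∃ T : V ≃ₗ[ℂ] V, ∀ g g' : ↥N, (↑g' : G) = x⁻¹ * ↑g * x →
        (T : V →ₗ[ℂ] V) ∘ₗ (π g' : V →ₗ[ℂ] V) =
          (π g : V →ₗ[ℂ] V) ∘ₗ (T : V →ₗ[ℂ] V))
    (hNle : N ≤ G₂)
    {W : Type*} [AddCommGroup W] [Module ℂ W] [Nontrivial W]
    (ρ : Representation ℂ ↥G₂ W)
    (hρirr : ∀ U : Submodule ℂ W, (∀ (g : ↥G₂) (w : W), w ∈ U → ρ g w ∈ U) →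
      U = ⊥ ∨ U = ⊤)
    (hsub : ∃ Φ : W →ₗ[ℂ] ↥(IndSubmodule (N.subgroupOf G₂)
        (π.comp (Subgroup.subgroupOfEquivOfLe hNle).toMonoidHom)),
      Function.Injective Φ ∧ ∀ (g : ↥G₂) (w : W),
        Φ (ρ g w) = IndRep (N.subgroupOf G₂)
          (π.comp (Subgroup.subgroupOfEquivOfLe hNle).toMonoidHom) g (Φ w)) :
    ∀ U : Submodule ℂ ↥(IndSubmodule G₂ ρ),
      (∀ (x : G) (w : ↥(IndSubmodule G₂ ρ)), w ∈ U → IndRep G₂ ρ x w ∈ U) →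
      U = ⊥ ∨ U = ⊤ :=
  induced_from_G2_irreducible_general N hN π hπirr G₂ hG₂ hNle ρ hρirr hsub
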